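/- arXiv:math/0310299 — 2 statements merged into one kernel-verified Lean document; each statement's English description precedes it below -/
import Mathlib

section
/- Let 0 = r_0 < r_1 < ⋯ < r_l = r be integers with l ≥ 2. Then r_1(r - r_1) + (r - r_2)(r_2 - r_1) + ⋯ + (r - r_l)(r_l - r_{l-1}) ≥ r - 1. -/
/-! The first term alone suffices: every later summand is a product of two nonnegative factors,
and `r₁ (r - r₁) - (r - 1) = (r₁ - 1)(r - r₁ - 1) ≥ 0` because `l ≥ 2` forces `1 ≤ r₁ ≤ r - 1`. -/

theorem sub_one_le_mul_sub {R : Type*} [CommRing R] [LinearOrder R] [IsStrictOrderedRing R]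
    {a r : R} (ha : 1 ≤ a) (hra : 1 ≤ r - a) : r - 1 ≤ a * (r - a) := by
  nlinarith [mul_nonneg (sub_nonneg.2 ha) (sub_nonneg.2 hra)]

theorem MonotoneOn.mul_sub_succ_nonneg {R : Type*} [CommRing R] [PartialOrder R]
    [IsOrderedRing R] {f : ℕ → R} {l i : ℕ} (hf : MonotoneOn f (Set.Iic l)) (hi : i < l) :
    0 ≤ (f l - f (i + 1)) * (f (i + 1) - f i) := by
  have hi' : i + 1 ≤ l := hi
  refine mul_nonneg (sub_nonneg.2 ?_) (sub_nonneg.2 ?_)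
  · exact hf (Set.mem_Iic.2 hi') Set.self_mem_Iic hi'
  · exact hf (Set.mem_Iic.2 hi.le) (Set.mem_Iic.2 hi') (Nat.le_succ i)

/-- For integers `0 = r_0 < r_1 < ⋯ < r_l = r` with `l ≥ 2`,
`r_1 (r - r_1) + ∑_{i=1}^{l-1} (r - r_{i+1})(r_{i+1} - r_i) ≥ r - 1`. -/
theorem stmt_2 (l : ℕ) (hl : 2 ≤ l) (r : ℤ) (rf : ℕ → ℤ)
    (h0 : rf 0 = 0) (hlast : rf l = r) (hmono : ∀ i < l, rf i < rf (i + 1)) :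
    r - 1 ≤ rf 1 * (r - rf 1)
      + ∑ i ∈ Finset.Ico 1 l, (r - rf (i + 1)) * (rf (i + 1) - rf i) := by
  have hstrict : StrictMonoOn rf (Set.Iic l) := strictMonoOn_Iic_of_lt_succ hmono
  have hr₁ : 1 ≤ rf 1 := by have : rf 0 < rf 1 := hmono 0 (by omega); omega
  have hr₁r : 1 ≤ r - rf 1 := by
    have : rf 1 < rf l := hstrict (Set.mem_Iic.2 (by omega)) Set.self_mem_Iic (by omega)
    omega
  have hsum : 0 ≤ ∑ i ∈ Finset.Ico 1 l, (r - rf (i + 1)) * (rf (i + 1) - rf i) :=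
    Finset.sum_nonneg fun i hi ↦
      hlast ▸ hstrict.monotoneOn.mul_sub_succ_nonneg (Finset.mem_Ico.1 hi).2
  linarith [sub_one_le_mul_sub hr₁ hr₁r]
end

section
/- Fix genus g ≥ 2, rank r ≥ 1, and degree d. For every integer i, there are only finitely many Shatz polygons P for (r,d) whose codimension cod(P) = Σ_{1≤i<j≤l} r'_i r'_j (μ_i − μ_j + g − 1) is less than i. -/
/-- The slope `μ_i = (d_i - d_{i-1})/(r_i - r_{i-1})` of the `i`-th segment of a
polygon with vertices `(rf i, df i)`. -/
noncomputable def shatzSlope (rf df : ℕ → ℤ) (i : ℕ) : ℚ :=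
  ((df i - df (i - 1) : ℤ) : ℚ) / ((rf i - rf (i - 1) : ℤ) : ℚ)

/-- The codimension `cod(P) = ∑_{1 ≤ i < j ≤ l} r'_i r'_j (μ_i - μ_j + g - 1)` of the
Shatz stratum attached to a polygon with `l` segments and vertices `(rf i, df i)`,
where `r'_i = rf i - rf (i-1)`. -/
noncomputable def shatzCod (g : ℤ) (l : ℕ) (rf df : ℕ → ℤ) : ℚ :=
  ∑ j ∈ Finset.Icc 1 l, ∑ i ∈ Finset.Ico 1 j,
    (((rf i - rf (i - 1)) * (rf j - rf (j - 1)) : ℤ) : ℚ)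
      * (shatzSlope rf df i - shatzSlope rf df j + (g : ℚ) - 1)

/-- A Shatz polygon for `(r, d)`, encoded as a triple `(l, rf, df)`: vertices
`(rf k, df k)` for `0 ≤ k ≤ l` going from `(0,0)` to `(r,d)`, with strictly
increasing first coordinates and strictly decreasing slopes (the data is frozen
at `(r,d)` beyond index `l` to pin the encoding down). -/
def IsShatzPolygon (r d : ℤ) (P : ℕ × (ℕ → ℤ) × (ℕ → ℤ)) : Prop :=
  1 ≤ P.1 ∧ P.2.1 0 = 0 ∧ P.2.2 0 = 0 ∧ P.2.1 P.1 = r ∧ P.2.2 P.1 = d ∧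
  (∀ k < P.1, P.2.1 k < P.2.1 (k + 1)) ∧
  (∀ k, P.1 ≤ k → P.2.1 k = r ∧ P.2.2 k = d) ∧
  (∀ k, 1 ≤ k → k < P.1 → shatzSlope P.2.1 P.2.2 (k + 1) < shatzSlope P.2.1 P.2.2 k)

/-! Every summand of `cod(P)` is nonnegative, and the one for the first and last segments is at
least `μ_1 - μ_l`. Since the slopes decrease and `d / r` is their weighted average, `cod(P) < i`
therefore keeps every slope within `i` of `d / r`. Together with `1 ≤ l ≤ r` and `0 ≤ r_k ≤ r`
this confines the vertices to a bounded set of lattice points, leaving finitely many polygons. -/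

theorem Set.Finite.setOf_seq_stabilizing {α : Type*} {s : Set α} (hs : s.Finite) (N : ℕ) :
    {f : ℕ → α | (∀ k, f k ∈ s) ∧ ∀ k, N ≤ k → f k = f N}.Finite := by
  apply Set.Finite.of_finite_image (f := fun f (k : Fin (N + 1)) => f k)
  · refine (Set.Finite.pi fun _ => hs).subset ?_
    rintro _ ⟨f, ⟨hf, -⟩, rfl⟩ k -
    exact hf k
  · rintro f ⟨-, hf⟩ f' ⟨-, hf'⟩ heq
    have hinit : ∀ k ≤ N, f k = f' k := fun k hk => congrFun heq ⟨k, by omega⟩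
    funext k
    rcases le_total k N with hk | hk
    · exact hinit k hk
    · rw [hf k hk, hf' k hk, hinit N le_rfl]

namespace IsShatzPolygon

variable {r d : ℤ} {l : ℕ} {rf df : ℕ → ℤ}

theorem one_le_length (hP : IsShatzPolygon r d (l, rf, df)) : 1 ≤ l := hP.1

theorem rf_zero (hP : IsShatzPolygon r d (l, rf, df)) : rf 0 = 0 := hP.2.1

theorem df_zero (hP : IsShatzPolygon r d (l, rf, df)) : df 0 = 0 := hP.2.2.1

theorem rf_last (hP : IsShatzPolygon r d (l, rf, df)) : rf l = r := hP.2.2.2.1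

theorem df_last (hP : IsShatzPolygon r d (l, rf, df)) : df l = d := hP.2.2.2.2.1

theorem rf_lt_succ (hP : IsShatzPolygon r d (l, rf, df)) {k : ℕ} (hk : k < l) :
    rf k < rf (k + 1) :=
  hP.2.2.2.2.2.1 k hk

theorem eq_of_le (hP : IsShatzPolygon r d (l, rf, df)) {k : ℕ} (hk : l ≤ k) :
    rf k = r ∧ df k = d :=
  hP.2.2.2.2.2.2.1 k hk

theorem slope_succ_lt (hP : IsShatzPolygon r d (l, rf, df)) {k : ℕ} (hk : 1 ≤ k)
    (hkl : k < l) : shatzSlope rf df (k + 1) < shatzSlope rf df k :=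
  hP.2.2.2.2.2.2.2 k hk hkl

theorem rank_step_pos (hP : IsShatzPolygon r d (l, rf, df)) {j : ℕ} (hj : 1 ≤ j) (hjl : j ≤ l) :
    0 < rf j - rf (j - 1) := by
  have := hP.rf_lt_succ (k := j - 1) (by omega)
  rw [Nat.sub_add_cancel hj] at this
  omega

theorem le_rf (hP : IsShatzPolygon r d (l, rf, df)) {k : ℕ} (hk : k ≤ l) : (k : ℤ) ≤ rf k := by
  induction k with
  | zero => simp [hP.rf_zero]
  | succ k ih =>
    have := hP.rank_step_pos (j := k + 1) (by omega) hk
    push_cast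
    simp only [Nat.add_sub_cancel] at this
    linarith [ih (by omega)]

theorem le_rank (hP : IsShatzPolygon r d (l, rf, df)) : (l : ℤ) ≤ r :=
  hP.rf_last ▸ hP.le_rf le_rfl

theorem one_le_rank (hP : IsShatzPolygon r d (l, rf, df)) : 1 ≤ r := by
  have := hP.le_rank
  have := hP.one_le_length
  omega

theorem rf_mem_Icc (hP : IsShatzPolygon r d (l, rf, df)) (k : ℕ) : rf k ∈ Set.Icc 0 r := by
  have hmono : MonotoneOn rf (Set.Iic l) :=
    monotoneOn_of_le_succ Set.ordConnected_Iic fun k _ _ hk =>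
      (hP.rf_lt_succ (by simpa using hk)).le
  rcases le_total k l with hk | hk
  · have h0 := hmono (Set.mem_Iic.2 (Nat.zero_le l)) hk (Nat.zero_le k)
    have hl := hmono hk (Set.mem_Iic.2 le_rfl) hk
    rw [hP.rf_zero] at h0
    rw [hP.rf_last] at hl
    exact ⟨h0, hl⟩
  · rw [(hP.eq_of_le hk).1]
    exact ⟨by linarith [hP.one_le_rank], le_rfl⟩

theorem slope_antitoneOn (hP : IsShatzPolygon r d (l, rf, df)) :
    AntitoneOn (shatzSlope rf df) (Set.Icc 1 l) :=
  antitoneOn_of_succ_le Set.ordConnected_Icc fun k _ hk hk' => by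
    simp only [Order.succ_eq_add_one, Set.mem_Icc] at hk hk'
    exact (hP.slope_succ_lt hk.1 (by omega)).le

theorem rank_step_mul_slope (hP : IsShatzPolygon r d (l, rf, df)) {j : ℕ} (hj : 1 ≤ j)
    (hjl : j ≤ l) :
    ((rf j - rf (j - 1) : ℤ) : ℚ) * shatzSlope rf df j = ((df j - df (j - 1) : ℤ) : ℚ) := by
  have hne : ((rf j - rf (j - 1) : ℤ) : ℚ) ≠ 0 := by
    exact_mod_cast (hP.rank_step_pos hj hjl).ne'
  rw [shatzSlope, mul_div_cancel₀ _ hne]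

theorem df_mem_Icc_of_slope_mem_Icc (hP : IsShatzPolygon r d (l, rf, df)) {a b : ℚ} {k : ℕ}
    (hk : k ≤ l) (hab : ∀ j, 1 ≤ j → j ≤ k → shatzSlope rf df j ∈ Set.Icc a b) :
    (df k : ℚ) ∈ Set.Icc (rf k * a) (rf k * b) := by
  induction k with
  | zero => simp [hP.rf_zero, hP.df_zero]
  | succ k ih =>
    obtain ⟨ha, hb⟩ := ih (by omega) fun j hj hjk => hab j hj (by omega)
    obtain ⟨hμa, hμb⟩ := hab (k + 1) (by omega) le_rfl
    have hstep := hP.rank_step_mul_slope (j := k + 1) (by omega) hk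
    have hpos : (0 : ℚ) < ((rf (k + 1) - rf k : ℤ) : ℚ) := by
      exact_mod_cast hP.rank_step_pos (j := k + 1) (by omega) hk
    simp only [Nat.add_sub_cancel, Int.cast_sub] at hstep hpos
    constructor <;> nlinarith

theorem slope_sub_le_shatzCod (hP : IsShatzPolygon r d (l, rf, df)) {g : ℤ} (hg : 1 ≤ g) :
    shatzSlope rf df 1 - shatzSlope rf df l ≤ shatzCod g l rf df := by
  have hterm : ∀ a j, 1 ≤ a → a < j → j ≤ l →
      shatzSlope rf df a - shatzSlope rf df j ≤
        (((rf a - rf (a - 1)) * (rf j - rf (j - 1)) : ℤ) : ℚ)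
          * (shatzSlope rf df a - shatzSlope rf df j + (g : ℚ) - 1) := by
    intro a j ha haj hj
    have hμ : 0 ≤ shatzSlope rf df a - shatzSlope rf df j :=
      sub_nonneg.2 <| hP.slope_antitoneOn ⟨ha, by omega⟩ ⟨by omega, hj⟩ haj.le
    have hg' : (1 : ℚ) ≤ g := by exact_mod_cast hg
    have hweight : (1 : ℚ) ≤ (((rf a - rf (a - 1)) * (rf j - rf (j - 1)) : ℤ) : ℚ) := by
      have := mul_pos (hP.rank_step_pos ha (by omega)) (hP.rank_step_pos (by omega) hj)
      exact_mod_cast (show (1 : ℤ) ≤ _ by omega)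
    calc shatzSlope rf df a - shatzSlope rf df j
        ≤ shatzSlope rf df a - shatzSlope rf df j + (g : ℚ) - 1 := by linarith
      _ ≤ _ := le_mul_of_one_le_left (by linarith) hweight
  rcases hP.one_le_length.eq_or_lt with rfl | hl
  · simp [shatzCod]
  have hinner : ∀ j ∈ Finset.Icc 1 l, ∀ a ∈ Finset.Ico 1 j,
      0 ≤ (((rf a - rf (a - 1)) * (rf j - rf (j - 1)) : ℤ) : ℚ)
        * (shatzSlope rf df a - shatzSlope rf df j + (g : ℚ) - 1) := by
    intro j hj a ha
    simp only [Finset.mem_Icc, Finset.mem_Ico] at hj ha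
    exact (sub_nonneg.2 <| hP.slope_antitoneOn ⟨ha.1, by omega⟩ hj ha.2.le).trans
      (hterm a j ha.1 ha.2 hj.2)
  calc _ ≤ _ := hterm 1 l le_rfl hl le_rfl
    _ ≤ _ := Finset.single_le_sum (hinner l (by simp; omega)) (by simp; omega)
    _ ≤ shatzCod g l rf df :=
      Finset.single_le_sum (fun j hj => Finset.sum_nonneg (hinner j hj)) (by simp; omega)

theorem abs_slope_sub_le_shatzCod (hP : IsShatzPolygon r d (l, rf, df)) {g : ℤ} (hg : 1 ≤ g)
    {j : ℕ} (hj : 1 ≤ j) (hjl : j ≤ l) :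
    |shatzSlope rf df j - d / r| ≤ shatzCod g l rf df := by
  have hr : (0 : ℚ) < r := by exact_mod_cast hP.one_le_rank
  have hl : l ∈ Set.Icc 1 l := ⟨hP.one_le_length, le_rfl⟩
  have hchord := hP.df_mem_Icc_of_slope_mem_Icc (a := shatzSlope rf df l)
    (b := shatzSlope rf df 1) le_rfl fun k hk hkl =>
      ⟨hP.slope_antitoneOn ⟨hk, hkl⟩ hl hkl, hP.slope_antitoneOn ⟨le_rfl, hl.1⟩ ⟨hk, hkl⟩ hk⟩
  rw [hP.rf_last, hP.df_last] at hchord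
  have hlow : shatzSlope rf df l ≤ d / r := (le_div_iff₀ hr).2 (by linarith [hchord.1])
  have hup : d / r ≤ shatzSlope rf df 1 := (div_le_iff₀ hr).2 (by linarith [hchord.2])
  have h1 := hP.slope_antitoneOn ⟨le_rfl, hl.1⟩ ⟨hj, hjl⟩ hj
  have hl' := hP.slope_antitoneOn ⟨hj, hjl⟩ hl hjl
  have hcod := hP.slope_sub_le_shatzCod hg
  rw [abs_sub_le_iff]
  constructor <;> linarith

theorem abs_df_le (hP : IsShatzPolygon r d (l, rf, df)) {M : ℚ}
    (hM : ∀ j, 1 ≤ j → j ≤ l → |shatzSlope rf df j| ≤ M) (k : ℕ) : |(df k : ℚ)| ≤ r * M := by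
  wlog hk : k ≤ l generalizing k
  · rw [(hP.eq_of_le (not_le.1 hk).le).2, ← hP.df_last]
    exact this l le_rfl
  have hM0 : 0 ≤ M := (abs_nonneg _).trans (hM 1 le_rfl hP.one_le_length)
  have hchord := hP.df_mem_Icc_of_slope_mem_Icc (a := -M) (b := M) hk fun j hj hjk =>
    abs_le.1 (hM j hj (hjk.trans hk))
  have hrk : (rf k : ℚ) ≤ r := by exact_mod_cast (hP.rf_mem_Icc k).2
  have hrk0 : (0 : ℚ) ≤ rf k := by exact_mod_cast (hP.rf_mem_Icc k).1
  rw [abs_le]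
  constructor <;> nlinarith [hchord.1, hchord.2]

end IsShatzPolygon

theorem stmt_17_general (g r d : ℤ) (hg : 2 ≤ g) (i : ℤ) :
    {P : ℕ × (ℕ → ℤ) × (ℕ → ℤ) |
      IsShatzPolygon r d P ∧ shatzCod g P.1 P.2.1 P.2.2 < (i : ℚ)}.Finite := by
  set N := r.toNat
  set B := r * (|d| + |i|)
  refine ((Set.finite_Iic N).prod (((Set.finite_Icc 0 r).setOf_seq_stabilizing N).prod
    ((Set.finite_Icc (-B) B).setOf_seq_stabilizing N))).subset ?_
  rintro ⟨l, rf, df⟩ ⟨hP, hcod⟩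
  have hlN : l ≤ N := by have := hP.le_rank; omega
  have hslope : ∀ j, 1 ≤ j → j ≤ l → |shatzSlope rf df j| ≤ ((|d| + |i| : ℤ) : ℚ) := by
    intro j hj hjl
    have hr : (1 : ℚ) ≤ r := by exact_mod_cast hP.one_le_rank
    have hdr : |(d : ℚ) / r| ≤ |(d : ℚ)| := by
      rw [abs_div, abs_of_pos (a := (r : ℚ)) (by linarith)]
      exact div_le_self (abs_nonneg _) hr
    have hi : (i : ℚ) ≤ |(i : ℚ)| := le_abs_self _
    have := hP.abs_slope_sub_le_shatzCod (by omega : (1 : ℤ) ≤ g) hj hjl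
    push_cast
    linarith [abs_sub_abs_le_abs_sub (shatzSlope rf df j) (d / r)]
  have hstable : ∀ k, N ≤ k → rf k = rf N ∧ df k = df N := fun k hk =>
    ⟨(hP.eq_of_le (hlN.trans hk)).1.trans (hP.eq_of_le hlN).1.symm,
      (hP.eq_of_le (hlN.trans hk)).2.trans (hP.eq_of_le hlN).2.symm⟩
  refine ⟨hlN, ⟨hP.rf_mem_Icc, fun k hk => (hstable k hk).1⟩,
    ⟨fun k => abs_le.1 ?_, fun k hk => (hstable k hk).2⟩⟩
  exact_mod_cast hP.abs_df_le hslope k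

/-- For fixed genus `g ≥ 2`, rank `r ≥ 1` and degree `d`, and any integer `i`,
only finitely many Shatz polygons `P` for `(r,d)` have codimension `cod(P) < i`. -/
theorem stmt_17 (g r d : ℤ) (hg : 2 ≤ g) (hr : 1 ≤ r) (i : ℤ) :
    {P : ℕ × (ℕ → ℤ) × (ℕ → ℤ) |
      IsShatzPolygon r d P ∧ shatzCod g P.1 P.2.1 P.2.2 < (i : ℚ)}.Finite :=
  stmt_17_general g r d hg i
end
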